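/- arXiv:1801.05683 — 6 statements merged into one kernel-verified Lean document; each statement's English description precedes it below -/
import Mathlib

section
/- Let (V, μ) be an associative algebra over a field K and let α : V → V be an algebra endomorphism (a linear map with α(μ(x,y)) = μ(α(x), α(y)) for all x, y). Then the triple V_α = (V, α∘μ, α), whose product is μ_α(x,y) = α(μ(x,y)), is a hom-associative algebra; that is, μ_α is bilinear and satisfies α(μ_α(x,y)) = μ_α(α(x), α(y)) and μ_α(α(x), μ_α(y,z)) = μ_α(μ_α(x,y), α(z)) for all x, y, z ∈ V. -/
/-- Yau twist of an associative algebra is hom-associative.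
If `(V, μ)` is an associative algebra over a field `K` and `α` is an algebra
endomorphism, then `V_α = (V, α∘μ, α)` is a hom-associative algebra: the product
`μ_α(x,y) = α(μ(x,y))` (bilinear, being a composition of linear maps) satisfies
multiplicativity and hom-associativity. -/
theorem stmt_0 {K V : Type*} [Field K] [AddCommGroup V] [Module K V]
    (μ : V →ₗ[K] V →ₗ[K] V) (α : V →ₗ[K] V)
    (hassoc : ∀ x y z : V, μ (μ x y) z = μ x (μ y z))
    (hmult : ∀ x y : V, α (μ x y) = μ (α x) (α y)) :
    let μα : V → V → V := fun x y => α (μ x y)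
    (∀ x y : V, α (μα x y) = μα (α x) (α y)) ∧
    (∀ x y z : V, μα (α x) (μα y z) = μα (μα x y) (α z)) :=
  -- Pushing α inward with `hmult`, both sides become `μ (α² x) (μ (α² y) (α² z))` up to `hassoc`.
  ⟨fun x y => by simp only [hmult], fun x y z => by simp only [hmult, hassoc]⟩
end

section
/- Let (V, μ₁, μ₂) be a 2-associative algebra over a field K (a vector space with two bilinear associative products μ₁ and μ₂) and let α : V → V be a linear map that is an algebra endomorphism for both products. Then V_α = (V, α∘μ₁, α∘μ₂, α) is a 2-hom-associative algebra, i.e. both (V, α∘μ₁, α) and (V, α∘μ₂, α) are hom-associative algebras. Moreover, if (V', μ₁', μ₂') is another 2-associative algebra with an endomorphism α' of both products, and f : V → V' is linear with f(μᵢ(x,y)) = μᵢ'(f(x), f(y)) for i = 1, 2 and f∘α = α'∘f, then f is a morphism of 2-hom-associative algebras from (V, α∘μ₁, α∘μ₂, α) to (V', α'∘μ₁', α'∘μ₂', α'), i.e. f∘(α∘μᵢ) = (α'∘μᵢ')∘(f⊗f) for i = 1, 2 and f∘α = α'∘f. -/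
/-! Every identity of the twist `α ∘ μ` is `α` applied to an identity of `μ`: hom-associativity
is `α` applied to associativity at `α x, α y, α z`, and a map carrying `μ` to `μ'` and `α` to
`α'` carries `α ∘ μ` to `α' ∘ μ'`. -/

def IsHomAssociative {V : Type*} (μ : V → V → V) (α : V → V) : Prop :=
  (∀ x y, α (μ x y) = μ (α x) (α y)) ∧ ∀ x y z, μ (α x) (μ y z) = μ (μ x y) (α z)

section YauTwist

variable {V V' : Type*}

theorem isHomAssociative_yauTwist {μ : V → V → V} {α : V → V}
    (hassoc : ∀ x y z, μ (μ x y) z = μ x (μ y z)) (hα : ∀ x y, α (μ x y) = μ (α x) (α y)) :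
    IsHomAssociative (fun x y => α (μ x y)) α :=
  ⟨fun x y => congrArg α (hα x y), fun x y z => by simp only [← hα, hassoc]⟩

theorem yauTwist_map_mul {μ : V → V → V} {μ' : V' → V' → V'} {α : V → V} {α' : V' → V'}
    {f : V → V'} (hf : ∀ x y, f (μ x y) = μ' (f x) (f y)) (hfα : ∀ x, f (α x) = α' (f x))
    (x y : V) : f (α (μ x y)) = α' (μ' (f x) (f y)) := by
  rw [hfα, hf]

end YauTwist

theorem stmt_2_general {K V V' : Type*} [Field K] [AddCommGroup V] [Module K V]
    [AddCommGroup V'] [Module K V']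
    (μ₁ μ₂ : V →ₗ[K] V →ₗ[K] V) (μ₁' μ₂' : V' →ₗ[K] V' →ₗ[K] V')
    (α : V →ₗ[K] V) (α' : V' →ₗ[K] V') (f : V →ₗ[K] V')
    (hassoc₁ : ∀ x y z : V, μ₁ (μ₁ x y) z = μ₁ x (μ₁ y z))
    (hassoc₂ : ∀ x y z : V, μ₂ (μ₂ x y) z = μ₂ x (μ₂ y z))
    (hα₁ : ∀ x y : V, α (μ₁ x y) = μ₁ (α x) (α y))
    (hα₂ : ∀ x y : V, α (μ₂ x y) = μ₂ (α x) (α y))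
    (hf₁ : ∀ x y : V, f (μ₁ x y) = μ₁' (f x) (f y))
    (hf₂ : ∀ x y : V, f (μ₂ x y) = μ₂' (f x) (f y))
    (hfα : ∀ x : V, f (α x) = α' (f x)) :
    -- (V, α∘μ₁, α) is a hom-associative algebra
    ((∀ x y : V, α (α (μ₁ x y)) = α (μ₁ (α x) (α y))) ∧
     (∀ x y z : V, α (μ₁ (α x) (α (μ₁ y z))) = α (μ₁ (α (μ₁ x y)) (α z)))) ∧
    -- (V, α∘μ₂, α) is a hom-associative algebra
    ((∀ x y : V, α (α (μ₂ x y)) = α (μ₂ (α x) (α y))) ∧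
     (∀ x y z : V, α (μ₂ (α x) (α (μ₂ y z))) = α (μ₂ (α (μ₂ x y)) (α z)))) ∧
    -- f is a morphism of 2-hom-associative algebras between the twists
    ((∀ x y : V, f (α (μ₁ x y)) = α' (μ₁' (f x) (f y))) ∧
     (∀ x y : V, f (α (μ₂ x y)) = α' (μ₂' (f x) (f y))) ∧
     (∀ x : V, f (α x) = α' (f x))) :=
  ⟨isHomAssociative_yauTwist hassoc₁ hα₁, isHomAssociative_yauTwist hassoc₂ hα₂,
    yauTwist_map_mul (μ' := fun x y => μ₁' x y) hf₁ hfα,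
    yauTwist_map_mul (μ' := fun x y => μ₂' x y) hf₂ hfα, hfα⟩

/-- The Yau twist of a 2-associative algebra `(V, μ₁, μ₂)` along an
endomorphism `α` of both products is a 2-hom-associative algebra
`(V, α∘μ₁, α∘μ₂, α)`, and a morphism `f` of 2-associative algebras intertwining the
twisting maps is a morphism of the twisted 2-hom-associative algebras. -/
theorem stmt_2 {K V V' : Type*} [Field K] [AddCommGroup V] [Module K V]
    [AddCommGroup V'] [Module K V']
    (μ₁ μ₂ : V →ₗ[K] V →ₗ[K] V) (μ₁' μ₂' : V' →ₗ[K] V' →ₗ[K] V')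
    (α : V →ₗ[K] V) (α' : V' →ₗ[K] V') (f : V →ₗ[K] V')
    (hassoc₁ : ∀ x y z : V, μ₁ (μ₁ x y) z = μ₁ x (μ₁ y z))
    (hassoc₂ : ∀ x y z : V, μ₂ (μ₂ x y) z = μ₂ x (μ₂ y z))
    (hα₁ : ∀ x y : V, α (μ₁ x y) = μ₁ (α x) (α y))
    (hα₂ : ∀ x y : V, α (μ₂ x y) = μ₂ (α x) (α y))
    (hassoc₁' : ∀ x y z : V', μ₁' (μ₁' x y) z = μ₁' x (μ₁' y z))
    (hassoc₂' : ∀ x y z : V', μ₂' (μ₂' x y) z = μ₂' x (μ₂' y z))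
    (hα₁' : ∀ x y : V', α' (μ₁' x y) = μ₁' (α' x) (α' y))
    (hα₂' : ∀ x y : V', α' (μ₂' x y) = μ₂' (α' x) (α' y))
    (hf₁ : ∀ x y : V, f (μ₁ x y) = μ₁' (f x) (f y))
    (hf₂ : ∀ x y : V, f (μ₂ x y) = μ₂' (f x) (f y))
    (hfα : ∀ x : V, f (α x) = α' (f x)) :
    -- (V, α∘μ₁, α) is a hom-associative algebra
    ((∀ x y : V, α (α (μ₁ x y)) = α (μ₁ (α x) (α y))) ∧
     (∀ x y z : V, α (μ₁ (α x) (α (μ₁ y z))) = α (μ₁ (α (μ₁ x y)) (α z)))) ∧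
    -- (V, α∘μ₂, α) is a hom-associative algebra
    ((∀ x y : V, α (α (μ₂ x y)) = α (μ₂ (α x) (α y))) ∧
     (∀ x y z : V, α (μ₂ (α x) (α (μ₂ y z))) = α (μ₂ (α (μ₂ x y)) (α z)))) ∧
    -- f is a morphism of 2-hom-associative algebras between the twists
    ((∀ x y : V, f (α (μ₁ x y)) = α' (μ₁' (f x) (f y))) ∧
     (∀ x y : V, f (α (μ₂ x y)) = α' (μ₂' (f x) (f y))) ∧
     (∀ x : V, f (α x) = α' (f x))) :=
  stmt_2_general μ₁ μ₂ μ₁' μ₂' α α' f hassoc₁ hassoc₂ hα₁ hα₂ hf₁ hf₂ hfα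
end

section
/- Let A = (V, μ, η, α) be a unital hom-associative algebra over a field K with unit e₂ = η(1) satisfying α(e₂) = e₂. Form Ṽ = K·e₁ ⊕ V (adjoining a new element e₁) and define: μ₁(e₁, u) = μ₁(u, e₁) = u for all u ∈ Ṽ and μ₁(x, y) = μ(x, y) for x, y ∈ V; η₁(1) = e₁; Δ₁(e₁) = e₁⊗e₁ and Δ₁(x) = α(x)⊗e₁ + e₁⊗α(x) − e₂⊗α(x) for x ∈ V; ε₁(e₁) = 1 and ε₁(x) = 0 for x ∈ V; α₁(e₁) = e₁ and α₁(x) = α(x) for x ∈ V (all extended linearly). Then: (a) (α₁⊗α₁)∘Δ₁ = Δ₁∘α₁; (b) (α₁⊗Δ₁)∘Δ₁ = (Δ₁⊗α₁)∘Δ₁; (c) (ε₁⊗α₁)(Δ₁(u)) = (α₁⊗ε₁)(Δ₁(u)) = α₁(α₁(u)) for all u ∈ Ṽ (identifying K⊗Ṽ and Ṽ⊗K with Ṽ); (d) Δ₁(μ₁(u,v)) = Δ₁(u)•Δ₁(v) for all u, v ∈ Ṽ, where (a⊗b)•(c⊗d) = μ₁(a,c)⊗μ₁(b,d); (e) ε₁(μ₁(u,v))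 = ε₁(u)ε₁(v) for all u, v ∈ Ṽ; and (f) ε₁∘α₁ = ε₁. In particular, (Ṽ, Δ₁, ε₁, α₁) is a counital hom-coassociative coalgebra compatible with the unital algebra (Ṽ, μ₁, η₁, α₁), so K₁(A) = (Ṽ, μ₁, η₁, Δ₁, ε₁, α₁) carries the Kaplansky hom-bialgebra structure. -/
open TensorProduct

namespace Stmt4

variable {K V : Type*} [Field K] [AddCommGroup V] [Module K V]

/-- The extended space `Ṽ = K·e₁ ⊕ V`, realized as `K × V`, with `e₁ = (1,0)`
and `V` embedded via `x ↦ (0,x)`. -/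
abbrev Vt (K V : Type*) := K × V

/-- The embedding `V → Ṽ`. -/
def iota : V →ₗ[K] Vt K V := LinearMap.inr K K V

/-- The adjoined unit `e₁ ∈ Ṽ`. -/
def e₁ : Vt K V := (1, 0)

/-- The Kaplansky multiplication `μ₁` on `Ṽ`: `e₁` is a two-sided unit and
`μ₁` restricts to `μ` on `V`. -/
def mu₁ (μ : V →ₗ[K] V →ₗ[K] V) : Vt K V →ₗ[K] Vt K V →ₗ[K] Vt K V :=
  LinearMap.mk₂ K
    (fun p q => (p.1 * q.1, p.1 • q.2 + q.1 • p.2 + μ p.2 q.2))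
    (by intro p p' q; ext <;>
      simp [add_mul, add_smul, smul_add, map_add] <;> abel)
    (by intro c p q; ext <;>
      simp [mul_assoc, mul_smul, smul_add, smul_comm q.1 c, map_smul] <;> ring_nf)
    (by intro p q q'; ext <;>
      simp [mul_add, add_smul, smul_add, map_add] <;> abel)
    (by intro c p q; ext <;>
      simp [mul_smul, smul_add, smul_comm p.1 c, map_smul] <;> ring_nf)

/-- The twisting map `α₁` on `Ṽ`: `α₁(e₁) = e₁`, `α₁ = α` on `V`. -/
def alpha₁ (α : V →ₗ[K] V) : Vt K V →ₗ[K] Vt K V := LinearMap.prodMap LinearMap.id α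

/-- The counit `ε₁` on `Ṽ`: `ε₁(e₁) = 1`, `ε₁ = 0` on `V`. -/
def eps₁ : Vt K V →ₗ[K] K := LinearMap.fst K K V

/-- The Kaplansky comultiplication `Δ₁` on `Ṽ`: `Δ₁(e₁) = e₁ ⊗ e₁` and
`Δ₁(x) = α(x)⊗e₁ + e₁⊗α(x) − e₂⊗α(x)` for `x ∈ V`. -/
noncomputable def Delta₁ (α : V →ₗ[K] V) (e₂ : V) :
    Vt K V →ₗ[K] (Vt K V) ⊗[K] (Vt K V) :=
  (LinearMap.fst K K V).smulRight ((e₁ : Vt K V) ⊗ₜ[K] (e₁ : Vt K V))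
    + ((TensorProduct.mk K (Vt K V) (Vt K V)).flip e₁).comp
        ((iota : V →ₗ[K] Vt K V).comp (α.comp (LinearMap.snd K K V)))
    + (TensorProduct.mk K (Vt K V) (Vt K V) e₁).comp
        ((iota : V →ₗ[K] Vt K V).comp (α.comp (LinearMap.snd K K V)))
    - (TensorProduct.mk K (Vt K V) (Vt K V) (iota e₂)).comp
        ((iota : V →ₗ[K] Vt K V).comp (α.comp (LinearMap.snd K K V)))

/-- The multiplication `•` on `Ṽ ⊗ Ṽ` induced by `μ₁`:
`(a⊗b)•(c⊗d) = μ₁(a,c) ⊗ μ₁(b,d)`. -/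
noncomputable def bullet (μ : V →ₗ[K] V →ₗ[K] V) :
    (Vt K V ⊗[K] Vt K V) →ₗ[K] (Vt K V ⊗[K] Vt K V) →ₗ[K] (Vt K V ⊗[K] Vt K V) :=
  TensorProduct.curry
    ((TensorProduct.map (TensorProduct.lift (mu₁ μ)) (TensorProduct.lift (mu₁ μ))).comp
      (TensorProduct.tensorTensorTensorComm K (Vt K V) (Vt K V) (Vt K V) (Vt K V)).toLinearMap)

/-!
All maps involved are linear (and `μ₁`, `•` bilinear), so each identity only has to be checked
on `e₁` and on `V`. On `e₁` everything is immediate: `e₁` is grouplike, fixed by `α₁`, and a unit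
for `μ₁`. On `V` the coalgebra identities are a direct expansion of `Δ₁` using
`α e₂ = e₂`; for `Δ₁(μ₁(x, y)) = Δ₁ x • Δ₁ y` the nine cross terms collapse to three once `α` is
multiplicative and `e₂` is a two-sided unit for `μ`.
-/

variable (μ : V →ₗ[K] V →ₗ[K] V) (α : V →ₗ[K] V) (e₂ : V)

theorem Vt.linearMap_ext {M : Type*} [AddCommMonoid M] [Module K M] {f g : Vt K V →ₗ[K] M}
    (h₁ : f e₁ = g e₁) (h₂ : ∀ x : V, f (iota x) = g (iota x)) : f = g :=
  LinearMap.prod_ext (LinearMap.ext_ring h₁) (LinearMap.ext h₂)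

@[simp] lemma mu₁_e₁_left (u : Vt K V) : mu₁ μ e₁ u = u := by
  simp [mu₁, e₁]

@[simp] lemma mu₁_e₁_right (u : Vt K V) : mu₁ μ u e₁ = u := by
  simp [mu₁, e₁]

@[simp] lemma mu₁_iota (x y : V) : mu₁ μ (iota x) (iota y) = iota (μ x y) := by
  simp [mu₁, iota]

@[simp] lemma alpha₁_e₁ : alpha₁ α e₁ = e₁ := by simp [alpha₁, e₁]

@[simp] lemma alpha₁_iota (x : V) : alpha₁ α (iota x) = iota (α x) := by
  simp [alpha₁, iota]

@[simp] lemma eps₁_e₁ : eps₁ (K := K) (V := V) e₁ = 1 := rfl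

@[simp] lemma eps₁_iota (x : V) : eps₁ (K := K) (iota x) = 0 := rfl

@[simp] lemma Delta₁_e₁ : Delta₁ α e₂ e₁ = (e₁ : Vt K V) ⊗ₜ[K] (e₁ : Vt K V) := by
  simp [Delta₁, e₁, iota, Prod.mk_zero_zero]

@[simp] lemma Delta₁_iota (x : V) :
    Delta₁ α e₂ (iota x)
      = iota (α x) ⊗ₜ[K] (e₁ : Vt K V) + (e₁ : Vt K V) ⊗ₜ[K] iota (α x)
        - iota e₂ ⊗ₜ[K] iota (α x) := by
  simp [Delta₁, e₁, iota]

@[simp] lemma bullet_tmul (a b c d : Vt K V) :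
    bullet μ (a ⊗ₜ[K] b) (c ⊗ₜ[K] d) = mu₁ μ a c ⊗ₜ[K] mu₁ μ b d := by
  simp [bullet]

@[simp] lemma bullet_e₁_tmul_e₁_left (t : Vt K V ⊗[K] Vt K V) :
    bullet μ ((e₁ : Vt K V) ⊗ₜ[K] (e₁ : Vt K V)) t = t := by
  induction t using TensorProduct.induction_on with
  | zero => simp
  | tmul a b => simp
  | add s t hs ht => simp [hs, ht]

@[simp] lemma bullet_e₁_tmul_e₁_right (t : Vt K V ⊗[K] Vt K V) :
    bullet μ t ((e₁ : Vt K V) ⊗ₜ[K] (e₁ : Vt K V)) = t := by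
  induction t using TensorProduct.induction_on with
  | zero => simp
  | tmul a b => simp
  | add s t hs ht => simp [hs, ht]

theorem map_alpha₁_comp_Delta₁ (hαe : α e₂ = e₂) :
    TensorProduct.map (alpha₁ α) (alpha₁ α) ∘ₗ Delta₁ α e₂ = Delta₁ α e₂ ∘ₗ alpha₁ α := by
  refine Vt.linearMap_ext ?_ fun x => ?_ <;> simp [hαe]

theorem Delta₁_coassoc (hαe : α e₂ = e₂) :
    TensorProduct.map (alpha₁ α) (Delta₁ α e₂) ∘ₗ Delta₁ α e₂
      = (TensorProduct.assoc K (Vt K V) (Vt K V) (Vt K V)).toLinearMap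
          ∘ₗ TensorProduct.map (Delta₁ α e₂) (alpha₁ α) ∘ₗ Delta₁ α e₂ := by
  refine Vt.linearMap_ext ?_ fun x => ?_
  · simp
  · simp only [LinearMap.comp_apply, LinearEquiv.coe_coe, map_add, map_sub, Delta₁_iota,
      alpha₁_e₁, alpha₁_iota, Delta₁_e₁, TensorProduct.map_tmul, TensorProduct.assoc_tmul,
      TensorProduct.tmul_add, TensorProduct.add_tmul, TensorProduct.tmul_sub,
      TensorProduct.sub_tmul, hαe]
    abel

theorem lid_map_eps₁_alpha₁_comp_Delta₁ :
    (TensorProduct.lid K (Vt K V)).toLinearMap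
        ∘ₗ TensorProduct.map (eps₁ (K := K) (V := V)) (alpha₁ α) ∘ₗ Delta₁ α e₂
      = alpha₁ α ∘ₗ alpha₁ α := by
  refine Vt.linearMap_ext ?_ fun x => ?_ <;> simp

theorem rid_map_alpha₁_eps₁_comp_Delta₁ :
    (TensorProduct.rid K (Vt K V)).toLinearMap
        ∘ₗ TensorProduct.map (alpha₁ α) (eps₁ (K := K) (V := V)) ∘ₗ Delta₁ α e₂
      = alpha₁ α ∘ₗ alpha₁ α := by
  refine Vt.linearMap_ext ?_ fun x => ?_ <;> simp

section Multiplicativity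

variable {μ α e₂}
variable (hmult : ∀ x y : V, α (μ x y) = μ (α x) (α y))
  (hunitl : ∀ x : V, μ e₂ x = x) (hunitr : ∀ x : V, μ x e₂ = x)
include hmult hunitl hunitr

theorem Delta₁_mu₁_iota (x y : V) :
    Delta₁ α e₂ (mu₁ μ (iota x) (iota y))
      = bullet μ (Delta₁ α e₂ (iota x)) (Delta₁ α e₂ (iota y)) := by
  simp only [map_add, map_sub, LinearMap.add_apply, LinearMap.sub_apply, mu₁_e₁_left,
    mu₁_e₁_right, mu₁_iota, Delta₁_iota, bullet_tmul, hmult, hunitl, hunitr]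
  abel

theorem Delta₁_mu₁ (u v : Vt K V) :
    Delta₁ α e₂ (mu₁ μ u v) = bullet μ (Delta₁ α e₂ u) (Delta₁ α e₂ v) := by
  suffices (mu₁ μ).compr₂ (Delta₁ α e₂) = (bullet μ).compl₁₂ (Delta₁ α e₂) (Delta₁ α e₂) from
    LinearMap.congr_fun (LinearMap.congr_fun this u) v
  refine Vt.linearMap_ext ?_ fun x => ?_ <;> refine Vt.linearMap_ext ?_ fun y => ?_
  · simp
  · simp
  · simp
  · exact Delta₁_mu₁_iota hmult hunitl hunitr x y

end Multiplicativity

theorem eps₁_mu₁ (u v : Vt K V) : eps₁ (mu₁ μ u v) = eps₁ u * eps₁ (K := K) (V := V) v := by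
  simp [mu₁, eps₁]

theorem eps₁_alpha₁ (u : Vt K V) : eps₁ (alpha₁ α u) = eps₁ (K := K) (V := V) u := by
  simp [alpha₁, eps₁]

theorem stmt_4_general (μ : V →ₗ[K] V →ₗ[K] V) (α : V →ₗ[K] V) (e₂ : V)
    (hmult : ∀ x y : V, α (μ x y) = μ (α x) (α y))
    (hunitl : ∀ x : V, μ e₂ x = x) (hunitr : ∀ x : V, μ x e₂ = x)
    (hαe : α e₂ = e₂) :
    -- (a) (α₁ ⊗ α₁) ∘ Δ₁ = Δ₁ ∘ α₁
    (∀ u : Vt K V, TensorProduct.map (alpha₁ α) (alpha₁ α) (Delta₁ α e₂ u)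
        = Delta₁ α e₂ (alpha₁ α u)) ∧
    -- (b) (α₁ ⊗ Δ₁) ∘ Δ₁ = (Δ₁ ⊗ α₁) ∘ Δ₁
    (∀ u : Vt K V, TensorProduct.map (alpha₁ α) (Delta₁ α e₂) (Delta₁ α e₂ u)
        = TensorProduct.assoc K (Vt K V) (Vt K V) (Vt K V)
            (TensorProduct.map (Delta₁ α e₂) (alpha₁ α) (Delta₁ α e₂ u))) ∧
    -- (c) (ε₁ ⊗ α₁)(Δ₁ u) = (α₁ ⊗ ε₁)(Δ₁ u) = α₁(α₁ u)
    (∀ u : Vt K V, TensorProduct.lid K (Vt K V)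
        (TensorProduct.map (eps₁ (K := K) (V := V)) (alpha₁ α) (Delta₁ α e₂ u))
        = alpha₁ α (alpha₁ α u)) ∧
    (∀ u : Vt K V, TensorProduct.rid K (Vt K V)
        (TensorProduct.map (alpha₁ α) (eps₁ (K := K) (V := V)) (Delta₁ α e₂ u))
        = alpha₁ α (alpha₁ α u)) ∧
    -- (d) Δ₁(μ₁(u,v)) = Δ₁(u) • Δ₁(v)
    (∀ u v : Vt K V, Delta₁ α e₂ (mu₁ μ u v)
        = bullet μ (Delta₁ α e₂ u) (Delta₁ α e₂ v)) ∧
    -- (e) ε₁(μ₁(u,v)) = ε₁(u)·ε₁(v)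
    (∀ u v : Vt K V, eps₁ (mu₁ μ u v) = eps₁ u * eps₁ (K := K) (V := V) v) ∧
    -- (f) ε₁ ∘ α₁ = ε₁
    (∀ u : Vt K V, eps₁ (alpha₁ α u) = eps₁ (K := K) (V := V) u) :=
  ⟨LinearMap.congr_fun (map_alpha₁_comp_Delta₁ α e₂ hαe),
    LinearMap.congr_fun (Delta₁_coassoc α e₂ hαe),
    LinearMap.congr_fun (lid_map_eps₁_alpha₁_comp_Delta₁ α e₂),
    LinearMap.congr_fun (rid_map_alpha₁_eps₁_comp_Delta₁ α e₂),
    Delta₁_mu₁ hmult hunitl hunitr, eps₁_mu₁ μ, eps₁_alpha₁ α⟩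

/-- first Kaplansky construction. Let `(V, μ, e₂, α)` be a unital
hom-associative algebra with `α(e₂) = e₂`. Then the data
`K₁(A) = (Ṽ, μ₁, η₁, Δ₁, ε₁, α₁)` defined above satisfies:
(a) comultiplicativity, (b) hom-coassociativity, (c) the hom-counital condition,
(d) `Δ₁` is multiplicative for `μ₁` w.r.t. `•`, (e) `ε₁` is multiplicative, and
(f) `ε₁ ∘ α₁ = ε₁`; i.e. `K₁(A)` is a unital hom-bialgebra. -/
theorem stmt_4 (μ : V →ₗ[K] V →ₗ[K] V) (α : V →ₗ[K] V) (e₂ : V)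
    (hmult : ∀ x y : V, α (μ x y) = μ (α x) (α y))
    (hassoc : ∀ x y z : V, μ (α x) (μ y z) = μ (μ x y) (α z))
    (hunitl : ∀ x : V, μ e₂ x = x) (hunitr : ∀ x : V, μ x e₂ = x)
    (hαe : α e₂ = e₂) :
    -- (a) (α₁ ⊗ α₁) ∘ Δ₁ = Δ₁ ∘ α₁
    (∀ u : Vt K V, TensorProduct.map (alpha₁ α) (alpha₁ α) (Delta₁ α e₂ u)
        = Delta₁ α e₂ (alpha₁ α u)) ∧
    -- (b) (α₁ ⊗ Δ₁) ∘ Δ₁ = (Δ₁ ⊗ α₁) ∘ Δ₁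
    (∀ u : Vt K V, TensorProduct.map (alpha₁ α) (Delta₁ α e₂) (Delta₁ α e₂ u)
        = TensorProduct.assoc K (Vt K V) (Vt K V) (Vt K V)
            (TensorProduct.map (Delta₁ α e₂) (alpha₁ α) (Delta₁ α e₂ u))) ∧
    -- (c) (ε₁ ⊗ α₁)(Δ₁ u) = (α₁ ⊗ ε₁)(Δ₁ u) = α₁(α₁ u)
    (∀ u : Vt K V, TensorProduct.lid K (Vt K V)
        (TensorProduct.map (eps₁ (K := K) (V := V)) (alpha₁ α) (Delta₁ α e₂ u))
        = alpha₁ α (alpha₁ α u)) ∧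
    (∀ u : Vt K V, TensorProduct.rid K (Vt K V)
        (TensorProduct.map (alpha₁ α) (eps₁ (K := K) (V := V)) (Delta₁ α e₂ u))
        = alpha₁ α (alpha₁ α u)) ∧
    -- (d) Δ₁(μ₁(u,v)) = Δ₁(u) • Δ₁(v)
    (∀ u v : Vt K V, Delta₁ α e₂ (mu₁ μ u v)
        = bullet μ (Delta₁ α e₂ u) (Delta₁ α e₂ v)) ∧
    -- (e) ε₁(μ₁(u,v)) = ε₁(u)·ε₁(v)
    (∀ u v : Vt K V, eps₁ (mu₁ μ u v) = eps₁ u * eps₁ (K := K) (V := V) v) ∧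
    -- (f) ε₁ ∘ α₁ = ε₁
    (∀ u : Vt K V, eps₁ (alpha₁ α u) = eps₁ (K := K) (V := V) u) :=
  stmt_4_general μ α e₂ hmult hunitl hunitr hαe

end Stmt4
end

section
/- Let (A, ·) be an associative algebra over a field K, α : A → A an algebra endomorphism, and d : A → A a derivation (d(a·b) = d(a)·b + a·d(b)) with d∘d = 0 and d∘α = α∘d. Define two bilinear products on A by x ⊣ y = α(x)·d(α(y)) and x ⊢ y = d(α(x))·α(y). Then (A, ⊣, ⊢, α) is a hom-associative dialgebra: both products are hom-associative with respect to α, α is multiplicative for both products, and the three axioms α(x)⊣(y⊣z) = α(x)⊣(y⊢z), (x⊢y)⊣α(z) = α(x)⊢(y⊣z), and (x⊢y)⊢α(z) = (x⊣y)⊢α(z) hold for all x, y, z ∈ A. -/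
/-! Write `a' = α (α a)`. Because `d ∘ d = 0`, the Leibniz rule collapses to
`d (u · d v) = d u · d v = d (d u · v)`, and since `α` commutes with `d` and with the product,
every iterated product occurring in the axioms reduces to one of the monomials
`x' · (d y' · d z')`, `d x' · (d y' · z')` or `d x' · (y' · d z')`; each axiom equates two
expressions reducing to the same monomial. -/

namespace DerivationDialgebra

variable {R A : Type*} [CommSemiring R] [AddCommMonoid A] [Module R A]
  (mul : A →ₗ[R] A →ₗ[R] A) (α d : A →ₗ[R] A)

def dashv (x y : A) : A := mul (α x) (d (α y))

def vdash (x y : A) : A := mul (d (α x)) (α y)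

variable {mul α d}

theorem map_mul_right_of_sq_eq_zero (hd : ∀ x y : A, d (mul x y) = mul (d x) y + mul x (d y))
    (hd2 : ∀ x : A, d (d x) = 0) (u v : A) : d (mul u (d v)) = mul (d u) (d v) := by
  rw [hd, hd2, map_zero, add_zero]

theorem map_mul_left_of_sq_eq_zero (hd : ∀ x y : A, d (mul x y) = mul (d x) y + mul x (d y))
    (hd2 : ∀ x : A, d (d x) = 0) (u v : A) : d (mul (d u) v) = mul (d u) (d v) := by
  rw [hd, hd2, map_zero, LinearMap.zero_apply, zero_add]

theorem map_dashv (hα : ∀ x y : A, α (mul x y) = mul (α x) (α y))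
    (hdα : ∀ x : A, d (α x) = α (d x)) (x y : A) :
    α (dashv mul α d x y) = dashv mul α d (α x) (α y) := by
  rw [dashv, dashv, hα, ← hdα]

theorem map_vdash (hα : ∀ x y : A, α (mul x y) = mul (α x) (α y))
    (hdα : ∀ x : A, d (α x) = α (d x)) (x y : A) :
    α (vdash mul α d x y) = vdash mul α d (α x) (α y) := by
  rw [vdash, vdash, hα, ← hdα]

theorem dashv_map_dashv (hα : ∀ x y : A, α (mul x y) = mul (α x) (α y))
    (hd : ∀ x y : A, d (mul x y) = mul (d x) y + mul x (d y))
    (hd2 : ∀ x : A, d (d x) = 0) (hdα : ∀ x : A, d (α x) = α (d x)) (x y z : A) :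
    dashv mul α d (α x) (dashv mul α d y z) =
      mul (α (α x)) (mul (d (α (α y))) (d (α (α z)))) := by
  rw [dashv, map_dashv hα hdα, dashv, map_mul_right_of_sq_eq_zero hd hd2]

theorem dashv_map_vdash (hα : ∀ x y : A, α (mul x y) = mul (α x) (α y))
    (hd : ∀ x y : A, d (mul x y) = mul (d x) y + mul x (d y))
    (hd2 : ∀ x : A, d (d x) = 0) (hdα : ∀ x : A, d (α x) = α (d x)) (x y z : A) :
    dashv mul α d (α x) (vdash mul α d y z) =
      mul (α (α x)) (mul (d (α (α y))) (d (α (α z)))) := by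
  rw [dashv, map_vdash hα hdα, vdash, map_mul_left_of_sq_eq_zero hd hd2]

theorem vdash_map_vdash (hα : ∀ x y : A, α (mul x y) = mul (α x) (α y))
    (hdα : ∀ x : A, d (α x) = α (d x)) (x y z : A) :
    vdash mul α d (α x) (vdash mul α d y z) =
      mul (d (α (α x))) (mul (d (α (α y))) (α (α z))) := by
  rw [vdash, map_vdash hα hdα, vdash]

theorem vdash_map_dashv (hα : ∀ x y : A, α (mul x y) = mul (α x) (α y))
    (hdα : ∀ x : A, d (α x) = α (d x)) (x y z : A) :
    vdash mul α d (α x) (dashv mul α d y z) =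
      mul (d (α (α x))) (mul (α (α y)) (d (α (α z)))) := by
  rw [vdash, map_dashv hα hdα, dashv]

theorem dashv_dashv_map (hassoc : ∀ x y z : A, mul (mul x y) z = mul x (mul y z))
    (hα : ∀ x y : A, α (mul x y) = mul (α x) (α y))
    (hdα : ∀ x : A, d (α x) = α (d x)) (x y z : A) :
    dashv mul α d (dashv mul α d x y) (α z) =
      mul (α (α x)) (mul (d (α (α y))) (d (α (α z)))) := by
  rw [dashv, map_dashv hα hdα, dashv, hassoc]

theorem dashv_vdash_map (hassoc : ∀ x y z : A, mul (mul x y) z = mul x (mul y z))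
    (hα : ∀ x y : A, α (mul x y) = mul (α x) (α y))
    (hdα : ∀ x : A, d (α x) = α (d x)) (x y z : A) :
    dashv mul α d (vdash mul α d x y) (α z) =
      mul (d (α (α x))) (mul (α (α y)) (d (α (α z)))) := by
  rw [dashv, map_vdash hα hdα, vdash, hassoc]

theorem vdash_vdash_map (hassoc : ∀ x y z : A, mul (mul x y) z = mul x (mul y z))
    (hα : ∀ x y : A, α (mul x y) = mul (α x) (α y))
    (hd : ∀ x y : A, d (mul x y) = mul (d x) y + mul x (d y))
    (hd2 : ∀ x : A, d (d x) = 0) (hdα : ∀ x : A, d (α x) = α (d x)) (x y z : A) :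
    vdash mul α d (vdash mul α d x y) (α z) =
      mul (d (α (α x))) (mul (d (α (α y))) (α (α z))) := by
  rw [vdash, map_vdash hα hdα, vdash, map_mul_left_of_sq_eq_zero hd hd2, hassoc]

theorem vdash_dashv_map (hassoc : ∀ x y z : A, mul (mul x y) z = mul x (mul y z))
    (hα : ∀ x y : A, α (mul x y) = mul (α x) (α y))
    (hd : ∀ x y : A, d (mul x y) = mul (d x) y + mul x (d y))
    (hd2 : ∀ x : A, d (d x) = 0) (hdα : ∀ x : A, d (α x) = α (d x)) (x y z : A) :
    vdash mul α d (dashv mul α d x y) (α z) =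
      mul (d (α (α x))) (mul (d (α (α y))) (α (α z))) := by
  rw [vdash, map_dashv hα hdα, dashv, map_mul_right_of_sq_eq_zero hd hd2, hassoc]

end DerivationDialgebra

open DerivationDialgebra in
/-- If `(A, ·)` is an associative algebra over a field `K`,
`α` an algebra endomorphism, and `d` a derivation with `d∘d = 0` and `d∘α = α∘d`,
then `x ⊣ y = α(x)·d(α(y))` and `x ⊢ y = d(α(x))·α(y)` make `(A, ⊣, ⊢, α)` a
hom-associative dialgebra. -/
theorem stmt_7 {K A : Type*} [Field K] [AddCommGroup A] [Module K A]
    (mul : A →ₗ[K] A →ₗ[K] A) (α d : A →ₗ[K] A)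
    (hassoc : ∀ x y z : A, mul (mul x y) z = mul x (mul y z))
    (hα : ∀ x y : A, α (mul x y) = mul (α x) (α y))
    (hd : ∀ x y : A, d (mul x y) = mul (d x) y + mul x (d y))
    (hd2 : ∀ x : A, d (d x) = 0)
    (hdα : ∀ x : A, d (α x) = α (d x)) :
    let dv : A → A → A := fun x y => mul (α x) (d (α y))   -- x ⊣ y
    let vd : A → A → A := fun x y => mul (d (α x)) (α y)   -- x ⊢ y
    -- both products are hom-associative with respect to α
    (∀ x y z : A, dv (α x) (dv y z) = dv (dv x y) (α z)) ∧
    (∀ x y z : A, vd (α x) (vd y z) = vd (vd x y) (α z)) ∧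
    -- α is multiplicative for both products
    (∀ x y : A, α (dv x y) = dv (α x) (α y)) ∧
    (∀ x y : A, α (vd x y) = vd (α x) (α y)) ∧
    -- the three dialgebra axioms
    (∀ x y z : A, dv (α x) (dv y z) = dv (α x) (vd y z)) ∧
    (∀ x y z : A, dv (vd x y) (α z) = vd (α x) (dv y z)) ∧
    (∀ x y z : A, vd (vd x y) (α z) = vd (dv x y) (α z)) := by
  intro dv vd
  refine ⟨fun x y z => ?_, fun x y z => ?_, map_dashv hα hdα, map_vdash hα hdα,
    fun x y z => ?_, fun x y z => ?_, fun x y z => ?_⟩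
  · exact (dashv_map_dashv hα hd hd2 hdα x y z).trans (dashv_dashv_map hassoc hα hdα x y z).symm
  · exact (vdash_map_vdash hα hdα x y z).trans (vdash_vdash_map hassoc hα hd hd2 hdα x y z).symm
  · exact (dashv_map_dashv hα hd hd2 hdα x y z).trans (dashv_map_vdash hα hd hd2 hdα x y z).symm
  · exact (dashv_vdash_map hassoc hα hdα x y z).trans (vdash_map_dashv hα hdα x y z).symm
  · exact (vdash_vdash_map hassoc hα hd hd2 hdα x y z).trans
      (vdash_dashv_map hassoc hα hd hd2 hdα x y z).symm
end

section
/- Let (D, ⊣, ⊢) be an associative dialgebra over a field K (two bilinear associative products satisfying x⊣(y⊣z) = x⊣(y⊢z), (x⊢y)⊣z = x⊢(y⊣z), and (x⊢y)⊢z = (x⊣y)⊢z) and let α : D → D be a dialgebra endomorphism (linear with α(x⊣y) = α(x)⊣α(y) and α(x⊢y) = α(x)⊢α(y)). Then D_α = (D, ⊣_α, ⊢_α, α), where x ⊣_α y = α(x⊣y) and x ⊢_α y = α(x⊢y), is a hom-associative dialgebra. Moreover, if (D', ⊣', ⊢') is another associative dialgebra with dialgebra endomorphism α', and f : D → D' is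 a dialgebra morphism satisfying f∘α = α'∘f, then f : D_α → D'_{α'} is a morphism of hom-associative dialgebras, i.e. f(x ⊣_α y) = f(x) ⊣'_{α'} f(y), f(x ⊢_α y) = f(x) ⊢'_{α'} f(y), and f∘α = α'∘f. -/
/-! Twisting by a multiplicative `α` turns every product of three factors, bracketed either way,
into `α²` of the corresponding untwisted product: e.g. `(x ⊢_α y) ⊣_α α z = α² ((x ⊢ y) ⊣ z)`.
Each axiom of a hom-associative dialgebra for `D_α` is therefore `α²` applied to the matching
axiom of the associative dialgebra `D`. -/

theorem stmt_8_general {K D D' : Type*} [Field K] [AddCommGroup D] [Module K D]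
    [AddCommGroup D'] [Module K D']
    (dv vd : D →ₗ[K] D →ₗ[K] D)           -- ⊣, ⊢ on D
    (dv' vd' : D' →ₗ[K] D' →ₗ[K] D')      -- ⊣', ⊢' on D'
    (α : D →ₗ[K] D) (α' : D' →ₗ[K] D') (f : D →ₗ[K] D')
    (hdvassoc : ∀ x y z : D, dv (dv x y) z = dv x (dv y z))
    (hvdassoc : ∀ x y z : D, vd (vd x y) z = vd x (vd y z))
    (hax1 : ∀ x y z : D, dv x (dv y z) = dv x (vd y z))
    (hax2 : ∀ x y z : D, dv (vd x y) z = vd x (dv y z))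
    (hax3 : ∀ x y z : D, vd (vd x y) z = vd (dv x y) z)
    (hαdv : ∀ x y : D, α (dv x y) = dv (α x) (α y))
    (hαvd : ∀ x y : D, α (vd x y) = vd (α x) (α y))
    (hfdv : ∀ x y : D, f (dv x y) = dv' (f x) (f y))
    (hfvd : ∀ x y : D, f (vd x y) = vd' (f x) (f y))
    (hfα : ∀ x : D, f (α x) = α' (f x)) :
    let dvα : D → D → D := fun x y => α (dv x y)    -- ⊣_α
    let vdα : D → D → D := fun x y => α (vd x y)    -- ⊢_α
    let dvα' : D' → D' → D' := fun x y => α' (dv' x y)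
    let vdα' : D' → D' → D' := fun x y => α' (vd' x y)
    -- D_α is a hom-associative dialgebra:
    (∀ x y z : D, dvα (α x) (dvα y z) = dvα (dvα x y) (α z)) ∧
    (∀ x y z : D, vdα (α x) (vdα y z) = vdα (vdα x y) (α z)) ∧
    (∀ x y : D, α (dvα x y) = dvα (α x) (α y)) ∧
    (∀ x y : D, α (vdα x y) = vdα (α x) (α y)) ∧
    (∀ x y z : D, dvα (α x) (dvα y z) = dvα (α x) (vdα y z)) ∧
    (∀ x y z : D, dvα (vdα x y) (α z) = vdα (α x) (dvα y z)) ∧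
    (∀ x y z : D, vdα (vdα x y) (α z) = vdα (dvα x y) (α z)) ∧
    -- f : D_α → D'_{α'} is a morphism of hom-associative dialgebras:
    (∀ x y : D, f (dvα x y) = dvα' (f x) (f y)) ∧
    (∀ x y : D, f (vdα x y) = vdα' (f x) (f y)) ∧
    (∀ x : D, f (α x) = α' (f x)) := by
  intro dvα vdα dvα' vdα'
  refine ⟨fun x y z => ?_, fun x y z => ?_, fun x y => ?_, fun x y => ?_, fun x y z => ?_,
    fun x y z => ?_, fun x y z => ?_, fun x y => ?_, fun x y => ?_, hfα⟩
  · simp only [dvα, ← hαdv, hdvassoc]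
  · simp only [vdα, ← hαvd, hvdassoc]
  · simp only [dvα, hαdv]
  · simp only [vdα, hαvd]
  · simp only [dvα, vdα, ← hαdv, hax1]
  · simp only [dvα, vdα, ← hαdv, ← hαvd, hax2]
  · simp only [dvα, vdα, ← hαvd, hax3]
  · simp only [dvα, dvα', hfα, hfdv]
  · simp only [vdα, vdα', hfα, hfvd]

/-- Yau twist of an associative dialgebra along a dialgebra
endomorphism is a hom-associative dialgebra, and a dialgebra morphism intertwining
the endomorphisms is a morphism of the twisted hom-associative dialgebras. -/
theorem stmt_8 {K D D' : Type*} [Field K] [AddCommGroup D] [Module K D]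
    [AddCommGroup D'] [Module K D']
    (dv vd : D →ₗ[K] D →ₗ[K] D)           -- ⊣, ⊢ on D
    (dv' vd' : D' →ₗ[K] D' →ₗ[K] D')      -- ⊣', ⊢' on D'
    (α : D →ₗ[K] D) (α' : D' →ₗ[K] D') (f : D →ₗ[K] D')
    (hdvassoc : ∀ x y z : D, dv (dv x y) z = dv x (dv y z))
    (hvdassoc : ∀ x y z : D, vd (vd x y) z = vd x (vd y z))
    (hax1 : ∀ x y z : D, dv x (dv y z) = dv x (vd y z))
    (hax2 : ∀ x y z : D, dv (vd x y) z = vd x (dv y z))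
    (hax3 : ∀ x y z : D, vd (vd x y) z = vd (dv x y) z)
    (hαdv : ∀ x y : D, α (dv x y) = dv (α x) (α y))
    (hαvd : ∀ x y : D, α (vd x y) = vd (α x) (α y))
    (hdvassoc' : ∀ x y z : D', dv' (dv' x y) z = dv' x (dv' y z))
    (hvdassoc' : ∀ x y z : D', vd' (vd' x y) z = vd' x (vd' y z))
    (hax1' : ∀ x y z : D', dv' x (dv' y z) = dv' x (vd' y z))
    (hax2' : ∀ x y z : D', dv' (vd' x y) z = vd' x (dv' y z))
    (hax3' : ∀ x y z : D', vd' (vd' x y) z = vd' (dv' x y) z)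
    (hα'dv : ∀ x y : D', α' (dv' x y) = dv' (α' x) (α' y))
    (hα'vd : ∀ x y : D', α' (vd' x y) = vd' (α' x) (α' y))
    (hfdv : ∀ x y : D, f (dv x y) = dv' (f x) (f y))
    (hfvd : ∀ x y : D, f (vd x y) = vd' (f x) (f y))
    (hfα : ∀ x : D, f (α x) = α' (f x)) :
    let dvα : D → D → D := fun x y => α (dv x y)    -- ⊣_α
    let vdα : D → D → D := fun x y => α (vd x y)    -- ⊢_α
    let dvα' : D' → D' → D' := fun x y => α' (dv' x y)
    let vdα' : D' → D' → D' := fun x y => α' (vd' x y)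
    -- D_α is a hom-associative dialgebra:
    (∀ x y z : D, dvα (α x) (dvα y z) = dvα (dvα x y) (α z)) ∧
    (∀ x y z : D, vdα (α x) (vdα y z) = vdα (vdα x y) (α z)) ∧
    (∀ x y : D, α (dvα x y) = dvα (α x) (α y)) ∧
    (∀ x y : D, α (vdα x y) = vdα (α x) (α y)) ∧
    (∀ x y z : D, dvα (α x) (dvα y z) = dvα (α x) (vdα y z)) ∧
    (∀ x y z : D, dvα (vdα x y) (α z) = vdα (α x) (dvα y z)) ∧
    (∀ x y z : D, vdα (vdα x y) (α z) = vdα (dvα x y) (α z)) ∧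
    -- f : D_α → D'_{α'} is a morphism of hom-associative dialgebras:
    (∀ x y : D, f (dvα x y) = dvα' (f x) (f y)) ∧
    (∀ x y : D, f (vdα x y) = vdα' (f x) (f y)) ∧
    (∀ x : D, f (α x) = α' (f x)) :=
  stmt_8_general dv vd dv' vd' α α' f hdvassoc hvdassoc hax1 hax2 hax3 hαdv hαvd hfdv hfvd hfα
end

section
/- Let (A, ·) be an associative algebra over a field K, α : A → A an algebra endomorphism, and d : A → A a derivation (d(a·b) = d(a)·b + a·d(b)) with d∘d = 0 and d∘α = α∘d. Define a bilinear bracket on A by [x, y] = α(x)·d(α(y)) − d(α(y))·α(x). Then (A, [·,·], α) is a hom-Leibniz algebra: [[x,y], α(z)] = [[x,z], α(y)] + [α(x), [y,z]] for all x, y, z ∈ A. -/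
/-!
Writing `⁅a, b⁆ = a·b − b·a` for the commutator, the bracket is `[x, y] = ⁅α x, α (d y)⁆`.
Since `α` preserves commutators and `d` is a derivation of them with `d² = 0`, the three
terms of the hom-Leibniz identity become `⁅⁅X, Y⁆, Z⁆`, `⁅⁅X, Z⁆, Y⁆` and `⁅X, ⁅Y, Z⁆⁆` with
`X = α² x`, `Y = α² (d y)`, `Z = α² (d z)`, so the identity is the Leibniz rule of the
commutator bracket of an associative algebra.
-/

section Commutator

variable {R A : Type*} [CommRing R] [AddCommGroup A] [Module R A]
  (mul : A →ₗ[R] A →ₗ[R] A)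

def mulCommutator (a b : A) : A := mul a b - mul b a

theorem mulCommutator_zero_right (a : A) : mulCommutator mul a 0 = 0 := by
  simp [mulCommutator]

theorem mulCommutator_leibniz (hassoc : ∀ x y z : A, mul (mul x y) z = mul x (mul y z))
    (a b c : A) :
    mulCommutator mul (mulCommutator mul a b) c =
      mulCommutator mul (mulCommutator mul a c) b + mulCommutator mul a (mulCommutator mul b c) := by
  simp only [mulCommutator, map_sub, LinearMap.sub_apply, hassoc]
  abel

theorem map_mulCommutator (f : A →ₗ[R] A) (hf : ∀ x y : A, f (mul x y) = mul (f x) (f y))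
    (a b : A) : f (mulCommutator mul a b) = mulCommutator mul (f a) (f b) := by
  simp only [mulCommutator, map_sub, hf]

theorem derivation_mulCommutator (d : A →ₗ[R] A)
    (hd : ∀ x y : A, d (mul x y) = mul (d x) y + mul x (d y)) (a b : A) :
    d (mulCommutator mul a b) = mulCommutator mul (d a) b + mulCommutator mul a (d b) := by
  simp only [mulCommutator, map_sub, hd]
  abel

end Commutator

/-- If `(A, ·)` is an associative algebra over a field `K`,
`α` an algebra endomorphism and `d` a derivation with `d∘d=0`, `d∘α=α∘d`, then the
bracket `[x,y] = α(x)·d(α(y)) − d(α(y))·α(x)` makes `(A, [·,·], α)` a hom-Leibniz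
algebra. -/
theorem stmt_9 {K A : Type*} [Field K] [AddCommGroup A] [Module K A]
    (mul : A →ₗ[K] A →ₗ[K] A) (α d : A →ₗ[K] A)
    (hassoc : ∀ x y z : A, mul (mul x y) z = mul x (mul y z))
    (hα : ∀ x y : A, α (mul x y) = mul (α x) (α y))
    (hd : ∀ x y : A, d (mul x y) = mul (d x) y + mul x (d y))
    (hd2 : ∀ x : A, d (d x) = 0)
    (hdα : ∀ x : A, d (α x) = α (d x)) :
    let br : A → A → A := fun x y => mul (α x) (d (α y)) - mul (d (α y)) (α x)
    ∀ x y z : A, br (br x y) (α z) = br (br x z) (α y) + br (α x) (br y z) := by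
  intro br x y z
  have br_eq : ∀ u v, br u v = mulCommutator mul (α u) (α (d v)) := fun u v => by
    simp only [br, mulCommutator, hdα]
  have d_br : ∀ u v, α (d (br u v)) = mulCommutator mul (α (α (d u))) (α (α (d v))) := by
    intro u v
    rw [← hdα, br_eq, map_mulCommutator mul α hα, derivation_mulCommutator mul d hd, hdα, hdα,
      hdα, hdα, hd2, map_zero, map_zero, mulCommutator_zero_right, add_zero]
  rw [br_eq, br_eq (br x z), br_eq (α x), d_br, hdα, hdα, br_eq, br_eq,
    map_mulCommutator mul α hα, map_mulCommutator mul α hα]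
  exact mulCommutator_leibniz mul hassoc _ _ _
end
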